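/- If B is a safe axis-aligned box for a bichromatic point set S, then any axis-aligned sub-box B' ⊆ B (with no point of S on the boundary of B' or its quadrants) is also safe for S. -/

import Mathlib

open Classical

noncomputable section

abbrev Pt := ℝ × ℝ

/-- An axis-aligned box in the plane. -/
structure Box where
  x0 : ℝ
  x1 : ℝ
  y0 : ℝ
  y1 : ℝ
  hx : x0 < x1
  hy : y0 < y1

/-- The cross of a box: the union of its vertical and horizontal strips. -/
def Box.cross (B : Box) : Set Pt :=
  {p | (B.x0 ≤ p.1 ∧ p.1 ≤ B.x1) ∨ (B.y0 ≤ p.2 ∧ p.2 ≤ B.y1)}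

/-- The four open quadrants of a box. -/
def Box.NE (B : Box) : Set Pt := {p | B.x1 < p.1 ∧ B.y1 < p.2}
def Box.NW (B : Box) : Set Pt := {p | p.1 < B.x0 ∧ B.y1 < p.2}
def Box.SE (B : Box) : Set Pt := {p | B.x1 < p.1 ∧ p.2 < B.y0}
def Box.SW (B : Box) : Set Pt := {p | p.1 < B.x0 ∧ p.2 < B.y0}

/-- Membership in the open interior of a box. -/
def Box.inside (B : Box) (p : Pt) : Prop :=
  B.x0 < p.1 ∧ p.1 < B.x1 ∧ B.y0 < p.2 ∧ p.2 < B.y1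

/-- Membership in the closed box. -/
def Box.memClosed (B : Box) (p : Pt) : Prop :=
  B.x0 ≤ p.1 ∧ p.1 ≤ B.x1 ∧ B.y0 ≤ p.2 ∧ p.2 ≤ B.y1

/-- `p` avoids the boundary lines of the box and of its quadrants. -/
def Box.offBoundary (B : Box) (p : Pt) : Prop :=
  p.1 ≠ B.x0 ∧ p.1 ≠ B.x1 ∧ p.2 ≠ B.y0 ∧ p.2 ≠ B.y1

/-- Minimal points of `T` towards the SW corner of the NE quadrant
(the usual minimal points under coordinatewise domination). -/
def neMinSet (T : Set Pt) : Set Pt :=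
  {p ∈ T | ∀ q ∈ T, (q.1 ≤ p.1 ∧ q.2 ≤ p.2) → q = p}

/-- Minimal points of `T` towards the SE corner of the NW quadrant. -/
def nwMinSet (T : Set Pt) : Set Pt :=
  {p ∈ T | ∀ q ∈ T, (p.1 ≤ q.1 ∧ q.2 ≤ p.2) → q = p}

/-- Minimal points of `T` towards the NW corner of the SE quadrant. -/
def seMinSet (T : Set Pt) : Set Pt :=
  {p ∈ T | ∀ q ∈ T, (q.1 ≤ p.1 ∧ p.2 ≤ q.2) → q = p}

/-- Minimal points of `T` towards the NE corner of the SW quadrant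
(the usual maximal points under coordinatewise domination). -/
def swMinSet (T : Set Pt) : Set Pt :=
  {p ∈ T | ∀ q ∈ T, (p.1 ≤ q.1 ∧ p.2 ≤ q.2) → q = p}

/-- `z` lies in the open axis-aligned rectangle spanned by `p` and `q`. -/
def openRect (p q z : Pt) : Prop :=
  min p.1 q.1 < z.1 ∧ z.1 < max p.1 q.1 ∧ min p.2 q.2 < z.2 ∧ z.2 < max p.2 q.2

/-- `p` and `q` see each other in `S`: the open rectangle they span is empty of `S`. -/
def sees (S : Set Pt) (p q : Pt) : Prop := ∀ z ∈ S, ¬ openRect p q z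

/-- `p` participates in `S`: some point of the opposite color sees `p`. -/
def participates (S : Set Pt) (color : Pt → Bool) (p : Pt) : Prop :=
  ∃ q ∈ S, color q ≠ color p ∧ sees S p q

/-- All points of `S` in the cross of `B` have color `c`. -/
def crossSafeFor (S : Set Pt) (color : Pt → Bool) (c : Bool) (B : Box) : Prop :=
  ∀ p ∈ S, p ∈ B.cross → color p = c

/-- `B` is `c`-safe for `S`: `c`-cross-safe and the four directional minimal
sets of the quadrants only contain points of color `c`. -/
def safeFor (S : Set Pt) (color : Pt → Bool) (c : Bool) (B : Box) : Prop :=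
  crossSafeFor S color c B ∧
  (∀ p ∈ neMinSet (S ∩ B.NE), color p = c) ∧
  (∀ p ∈ nwMinSet (S ∩ B.NW), color p = c) ∧
  (∀ p ∈ seMinSet (S ∩ B.SE), color p = c) ∧
  (∀ p ∈ swMinSet (S ∩ B.SW), color p = c)

/-- `B` is safe: red-safe (`true`) or blue-safe (`false`). -/
def isSafe (S : Set Pt) (color : Pt → Bool) (B : Box) : Prop :=
  safeFor S color true B ∨ safeFor S color false B

/-- General position: pairwise distinct x-coordinates and y-coordinates. -/
def genPos (S : Set Pt) : Prop :=
  ∀ p ∈ S, ∀ q ∈ S, p ≠ q → p.1 ≠ q.1 ∧ p.2 ≠ q.2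

/-!
Shrinking a box shrinks its cross and enlarges each quadrant only by points of the old cross.
Hence a minimal point of `S` in a quadrant of `B'` either lies in the cross of `B`, so it has
the safe color, or lies in the corresponding quadrant of `B`, where it is minimal as well.
-/

open Set

section Minimal

variable {α β : Type*} {f : α → β} {b : β} {T T' : Set α}

theorem forall_minimal_eq_of_subset (r : α → α → Prop) (hTT' : T ⊆ T')
    (hout : ∀ p ∈ T', p ∉ T → f p = b)
    (hT : ∀ p ∈ {p ∈ T | ∀ q ∈ T, r q p → q = p}, f p = b) :
    ∀ p ∈ {p ∈ T' | ∀ q ∈ T', r q p → q = p}, f p = b := by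
  rintro p ⟨hpT', hmin⟩
  by_cases hpT : p ∈ T
  · exact hT p ⟨hpT, fun q hq => hmin q (hTT' hq)⟩
  · exact hout p hpT' hpT

end Minimal

namespace Box

variable {B B' : Box}
  (hsub : B.x0 ≤ B'.x0 ∧ B'.x1 ≤ B.x1 ∧ B.y0 ≤ B'.y0 ∧ B'.y1 ≤ B.y1)
include hsub

theorem cross_subset_cross : B'.cross ⊆ B.cross := by
  rintro p (⟨h0, h1⟩ | ⟨h0, h1⟩)
  · exact Or.inl ⟨hsub.1.trans h0, h1.trans hsub.2.1⟩
  · exact Or.inr ⟨hsub.2.2.1.trans h0, h1.trans hsub.2.2.2⟩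

theorem NE_subset_NE : B.NE ⊆ B'.NE := fun _ ⟨hx, hy⟩ =>
  ⟨hsub.2.1.trans_lt hx, hsub.2.2.2.trans_lt hy⟩

theorem NW_subset_NW : B.NW ⊆ B'.NW := fun _ ⟨hx, hy⟩ =>
  ⟨hx.trans_le hsub.1, hsub.2.2.2.trans_lt hy⟩

theorem SE_subset_SE : B.SE ⊆ B'.SE := fun _ ⟨hx, hy⟩ =>
  ⟨hsub.2.1.trans_lt hx, hy.trans_le hsub.2.2.1⟩

theorem SW_subset_SW : B.SW ⊆ B'.SW := fun _ ⟨hx, hy⟩ =>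
  ⟨hx.trans_le hsub.1, hy.trans_le hsub.2.2.1⟩

theorem NE_diff_NE_subset_cross : B'.NE \ B.NE ⊆ B.cross := by
  rintro p ⟨⟨hx, hy⟩, hn⟩
  by_cases h : p.1 ≤ B.x1
  · exact Or.inl ⟨by linarith [B'.hx, hsub.1], h⟩
  · exact Or.inr ⟨by linarith [B'.hy, hsub.2.2.1], le_of_not_gt fun h' => hn ⟨not_le.1 h, h'⟩⟩

theorem NW_diff_NW_subset_cross : B'.NW \ B.NW ⊆ B.cross := by
  rintro p ⟨⟨hx, hy⟩, hn⟩
  by_cases h : B.x0 ≤ p.1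
  · exact Or.inl ⟨h, by linarith [B'.hx, hsub.2.1]⟩
  · exact Or.inr ⟨by linarith [B'.hy, hsub.2.2.1], le_of_not_gt fun h' => hn ⟨not_le.1 h, h'⟩⟩

theorem SE_diff_SE_subset_cross : B'.SE \ B.SE ⊆ B.cross := by
  rintro p ⟨⟨hx, hy⟩, hn⟩
  by_cases h : p.1 ≤ B.x1
  · exact Or.inl ⟨by linarith [B'.hx, hsub.1], h⟩
  · exact Or.inr ⟨le_of_not_gt fun h' => hn ⟨not_le.1 h, h'⟩, by linarith [B'.hy, hsub.2.2.2]⟩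

theorem SW_diff_SW_subset_cross : B'.SW \ B.SW ⊆ B.cross := by
  rintro p ⟨⟨hx, hy⟩, hn⟩
  by_cases h : B.x0 ≤ p.1
  · exact Or.inl ⟨h, by linarith [B'.hx, hsub.2.1]⟩
  · exact Or.inr ⟨le_of_not_gt fun h' => hn ⟨not_le.1 h, h'⟩, by linarith [B'.hy, hsub.2.2.2]⟩

theorem safeFor_of_subbox {S : Set Pt} {color : Pt → Bool} {c : Bool}
    (h : safeFor S color c B) : safeFor S color c B' := by
  obtain ⟨hcross, hne, hnw, hse, hsw⟩ := h
  have hout {Q Q' : Set Pt} (hQ : Q' \ Q ⊆ B.cross) :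
      ∀ p ∈ S ∩ Q', p ∉ S ∩ Q → color p = c := fun p ⟨hpS, hp⟩ hn =>
    hcross p hpS (hQ ⟨hp, fun hpQ => hn ⟨hpS, hpQ⟩⟩)
  exact ⟨fun p hpS hp => hcross p hpS (cross_subset_cross hsub hp),
    forall_minimal_eq_of_subset _ (inter_subset_inter_right S (NE_subset_NE hsub))
      (hout (NE_diff_NE_subset_cross hsub)) hne,
    forall_minimal_eq_of_subset _ (inter_subset_inter_right S (NW_subset_NW hsub))
      (hout (NW_diff_NW_subset_cross hsub)) hnw,
    forall_minimal_eq_of_subset _ (inter_subset_inter_right S (SE_subset_SE hsub))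
      (hout (SE_diff_SE_subset_cross hsub)) hse,
    forall_minimal_eq_of_subset _ (inter_subset_inter_right S (SW_subset_SW hsub))
      (hout (SW_diff_SW_subset_cross hsub)) hsw⟩

end Box

theorem stmt7 (S : Finset Pt) (color : Pt → Bool)
    (B B' : Box)
    (hsub : B.x0 ≤ B'.x0 ∧ B'.x1 ≤ B.x1 ∧ B.y0 ≤ B'.y0 ∧ B'.y1 ≤ B.y1)
    (hsafe : isSafe (↑S : Set Pt) color B) :
    isSafe (↑S : Set Pt) color B' :=
  hsafe.imp (Box.safeFor_of_subbox hsub) (Box.safeFor_of_subbox hsub)
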